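/- Unitary form of Proposition 2: let M be a complex 2×2 matrix with Tr(M·Mᴴ) = 1 whose Gram matrix M·Mᴴ has eigenvalues s and 1−s with 0 < s < 1, and let n ≥ 1. If there exist unitary 2ⁿ×2ⁿ complex matrices U and V and a complex 2^{n−1}×2^{n−1} matrix Z such that U · M^{⊗n} · Vᵀ = ((√2)⁻¹ · 1₂) ⊗ Z (after the canonical reindexing identifying the iterated product index type with Fin 2ⁿ and Fin 2 × Fin 2^{n−1} with Fin 2ⁿ), then s = 1/2. Equivalently: no number of copies of a non-maximally entangled two-qubit pure state (whose matrix form is M) can be mapped by local unitaries to the maximally entangled two-qubit state in tensor with any residual bipartite pure state. -/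

import Mathlib

/-!
Write `W = U · M^{⊗n} · Vᵀ`. Its Gram matrix `W Wᴴ` is unitarily similar to `(M Mᴴ)^{⊗n}`,
whose eigenvalues are the products `∏ₗ v(iₗ)` of eigenvalues `v` of `M Mᴴ`. For `s ≠ 1/2`
the two eigenvalues of `M Mᴴ` are distinct and positive, so the `n`-th power of the larger one
is a simple eigenvalue of `W Wᴴ`. On the other hand `c • 1₂ ⊗ Z = 1₂ ⊗ c • Z`, so `W Wᴴ` is
conjugate to `1₂ ⊗ Y Yᴴ` with `Y = c • Z`, whose characteristic polynomial is the square of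
that of `Y Yᴴ`: every eigenvalue has even multiplicity.
-/

open Matrix Kronecker Polynomial

/-- The `n`-fold Kronecker power of a square matrix `A`, indexed by `Fin n → m`
(the entry at `(i, j)` is `∏ k, A (i k) (j k)`, which is exactly the iterated
Kronecker product `A ⊗ A ⊗ ⋯ ⊗ A` under the canonical identification of the
index types). -/
noncomputable def kronPow {m : Type*} [Fintype m] (A : Matrix m m ℂ) (n : ℕ) :
    Matrix (Fin n → m) (Fin n → m) ℂ :=
  fun i j => ∏ k, A (i k) (j k)

namespace Polynomial

lemma prod_X_sub_C_ne_mul_self {ι K : Type*} [Fintype ι] [Field K]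
    {μ : ι → K} {i₀ : ι} (hμ : ∀ i ≠ i₀, μ i ≠ μ i₀) (q : K[X]) :
    ∏ i, (X - C (μ i)) ≠ q * q := by
  classical
  intro h
  have hprod : ∏ i, (X - C (μ i)) = ((Finset.univ.val.map μ).map fun a => X - C a).prod := by
    rw [Multiset.map_map]; rfl
  have hq : q * q ≠ 0 := h ▸ (monic_prod_of_monic _ _ fun i _ => monic_X_sub_C (μ i)).ne_zero
  have hcount := congrArg (fun p => p.roots.count (μ i₀)) h
  simp only [hprod, roots_multiset_prod_X_sub_C, roots_mul hq, Multiset.count_add] at hcount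
  have hone : (Finset.univ.val.map μ).count (μ i₀) = 1 := by
    rw [Multiset.count_map, ← Finset.filter_val, Finset.card_val, Finset.card_eq_one]
    refine ⟨i₀, Finset.ext fun i => ?_⟩
    simp only [Finset.mem_filter, Finset.mem_univ, true_and, Finset.mem_singleton]
    exact ⟨fun h => by_contra fun hi => hμ i hi h.symm, fun h => h ▸ rfl⟩
  omega

end Polynomial

lemma Finite.exists_forall_lt_of_injective {α β : Type*} [Finite α] [Nonempty α] [LinearOrder β]
    {f : α → β} (hf : Function.Injective f) : ∃ a, ∀ b ≠ a, f b < f a := by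
  obtain ⟨a, ha⟩ := Finite.exists_max f
  exact ⟨a, fun b hb => (ha b).lt_of_ne (hf.ne hb)⟩

lemma Finset.prod_comp_lt_pow_of_ne_const {ι m R : Type*} [Fintype ι] [CommSemiring R]
    [PartialOrder R] [IsStrictOrderedRing R] {v : m → R} {j₀ : m} (hpos : ∀ j, 0 < v j)
    (hdom : ∀ j ≠ j₀, v j < v j₀) {i : ι → m} (hi : i ≠ fun _ => j₀) :
    ∏ l, v (i l) < v j₀ ^ Fintype.card ι := by
  obtain ⟨l, hl⟩ := Function.ne_iff.mp hi
  rw [← Finset.card_univ, ← Finset.prod_const]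
  refine Finset.prod_lt_prod (fun _ _ => hpos _) (fun k _ => ?_) ⟨l, Finset.mem_univ l, hdom _ hl⟩
  rcases eq_or_ne (i k) j₀ with h | h
  · rw [h]
  · exact (hdom _ h).le

namespace Matrix

variable {n R : Type*} [Fintype n] [DecidableEq n] [CommRing R]

lemma charpoly_one_kronecker {l : Type*} [Fintype l] [DecidableEq l] (B : Matrix n n R) :
    ((1 : Matrix l l R) ⊗ₖ B).charpoly = B.charpoly ^ Fintype.card l := by
  have : charmatrix ((1 : Matrix l l R) ⊗ₖ B) = (1 : Matrix l l R[X]) ⊗ₖ charmatrix B := by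
    ext ⟨a, i⟩ ⟨b, j⟩
    by_cases hab : a = b <;> by_cases hij : i = j <;> simp [hab, hij]
  rw [charpoly, this, det_kronecker, det_one, one_pow, one_mul, charpoly]

lemma charpoly_unitary_mul_mul_conjTranspose_self [StarRing R] {U A V : Matrix n n R}
    (hU : U ∈ unitaryGroup n R) (hV : V ∈ unitaryGroup n R) :
    (U * A * V * (U * A * V)ᴴ).charpoly = (A * Aᴴ).charpoly := by
  have hU' : Uᴴ * U = 1 := Unitary.star_mul_self_of_mem hU
  have hV' : V * Vᴴ = 1 := Unitary.mul_star_self_of_mem hV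
  calc (U * A * V * (U * A * V)ᴴ).charpoly = (U * (A * Aᴴ * Uᴴ)).charpoly := by
        simp only [conjTranspose_mul, Matrix.mul_assoc, ← Matrix.mul_assoc V, hV', Matrix.one_mul]
    _ = (A * Aᴴ).charpoly := by rw [charpoly_mul_comm, Matrix.mul_assoc, hU', Matrix.mul_one]

lemma charpoly_reindex_mul_conjTranspose_self [StarRing R] {m : Type*} [Fintype m]
    [DecidableEq m] (e : m ≃ n) (A : Matrix m m R) :
    (reindex e e A * (reindex e e A)ᴴ).charpoly = (A * Aᴴ).charpoly := by
  rw [conjTranspose_reindex, reindex_apply, reindex_apply, submatrix_mul_equiv, ← reindex_apply,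
    charpoly_reindex]

end Matrix

lemma Matrix.IsHermitian.eigenvalues_pos_injective_of_charpoly_eq {m : Type*} [Fintype m]
    [DecidableEq m] {G : Matrix m m ℂ} (hG : G.IsHermitian) {a b : ℝ} (ha : 0 < a) (hb : 0 < b)
    (hab : a ≠ b) (h : G.charpoly = (X - C (a : ℂ)) * (X - C (b : ℂ))) :
    (∀ j, 0 < hG.eigenvalues j) ∧ Function.Injective hG.eigenvalues := by
  have hroots : Finset.univ.val.map (fun j => (hG.eigenvalues j : ℂ)) = {(a : ℂ), (b : ℂ)} := by
    have := hG.roots_charpoly_eq_eigenvalues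
    rw [h, roots_mul (mul_ne_zero (X_sub_C_ne_zero _) (X_sub_C_ne_zero _)), roots_X_sub_C,
      roots_X_sub_C, Multiset.singleton_add] at this
    exact this.symm
  constructor
  · intro j
    have hj : (hG.eigenvalues j : ℂ) ∈ ({(a : ℂ), (b : ℂ)} : Multiset ℂ) :=
      hroots ▸ Multiset.mem_map_of_mem _ (Finset.mem_univ_val j)
    simp only [Multiset.insert_eq_cons, Multiset.mem_cons, Multiset.mem_singleton,
      Complex.ofReal_inj] at hj
    rcases hj with hj | hj <;> rw [hj] <;> assumption
  · have hnodup : (Finset.univ.val.map fun j => (hG.eigenvalues j : ℂ)).Nodup := by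
      rw [hroots]
      simpa [Complex.ofReal_inj] using hab
    intro i j hij
    exact Multiset.inj_on_of_nodup_map hnodup i (Finset.mem_univ_val i) j
      (Finset.mem_univ_val j) (congrArg _ hij)

section KronPow

variable {m : Type*} [Fintype m]

lemma kronPow_mul (A B : Matrix m m ℂ) (n : ℕ) :
    kronPow A n * kronPow B n = kronPow (A * B) n := by
  ext i j
  simp only [kronPow, mul_apply, ← Finset.prod_mul_distrib]
  rw [Fintype.prod_sum]

lemma kronPow_conjTranspose (A : Matrix m m ℂ) (n : ℕ) : (kronPow A n)ᴴ = kronPow Aᴴ n := by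
  ext i j
  simp [kronPow, conjTranspose_apply]

variable [DecidableEq m]

lemma kronPow_diagonal (d : m → ℂ) (n : ℕ) :
    kronPow (diagonal d) n = diagonal fun i => ∏ l, d (i l) := by
  ext i j
  rcases eq_or_ne i j with rfl | hij
  · simp [kronPow]
  · obtain ⟨l, hl⟩ := Function.ne_iff.mp hij
    rw [diagonal_apply_ne _ hij]
    exact Finset.prod_eq_zero (Finset.mem_univ l) (diagonal_apply_ne _ hl)

lemma kronPow_one (n : ℕ) : kronPow (1 : Matrix m m ℂ) n = 1 := by
  simpa using kronPow_diagonal (fun _ : m => (1 : ℂ)) n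

lemma Matrix.IsHermitian.charpoly_kronPow {G : Matrix m m ℂ} (hG : G.IsHermitian) (n : ℕ) :
    (kronPow G n).charpoly = ∏ i : Fin n → m, (X - C ((∏ l, hG.eigenvalues (i l) : ℝ) : ℂ)) := by
  have hP : star (hG.eigenvectorUnitary : Matrix m m ℂ) * hG.eigenvectorUnitary = 1 :=
    Unitary.star_mul_self_of_mem hG.eigenvectorUnitary.2
  conv_lhs => rw [hG.spectral_theorem, Unitary.conjStarAlgAut_apply]
  rw [← kronPow_mul, ← kronPow_mul, charpoly_mul_comm, ← Matrix.mul_assoc, kronPow_mul (star _),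
    hP, kronPow_one, Matrix.one_mul, kronPow_diagonal, charpoly_diagonal]
  push_cast
  rfl

lemma Matrix.IsHermitian.charpoly_kronPow_ne_mul_self [Nonempty m] {G : Matrix m m ℂ}
    (hG : G.IsHermitian) (hpos : ∀ j, 0 < hG.eigenvalues j)
    (hinj : Function.Injective hG.eigenvalues) (n : ℕ) (q : ℂ[X]) :
    (kronPow G n).charpoly ≠ q * q := by
  obtain ⟨j₀, hdom⟩ := Finite.exists_forall_lt_of_injective hinj
  rw [hG.charpoly_kronPow]
  refine prod_X_sub_C_ne_mul_self (i₀ := fun _ => j₀) (fun i hi => ?_) q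
  rw [Ne, Complex.ofReal_inj, Finset.prod_const, Finset.card_univ]
  exact (Finset.prod_comp_lt_pow_of_ne_const hpos hdom hi).ne

end KronPow

/-- Unitary form of Proposition 2: if `M` is the matrix of a two-qubit pure state
(`Tr(M·Mᴴ) = 1`) whose Gram matrix `M·Mᴴ` has eigenvalues `s` and `1−s` with
`0 < s < 1`, and for some `n ≥ 1` there are `2ⁿ×2ⁿ` unitaries `U, V` and a matrix `Z`
with `U · M^{⊗n} · Vᵀ = ((√2)⁻¹·1₂) ⊗ Z` (under the canonical reindexings), then
`s = 1/2`. -/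
theorem unitary_prop2 (s : ℝ) (hs0 : 0 < s) (hs1 : s < 1)
    (M : Matrix (Fin 2) (Fin 2) ℂ)
    (hev : (M * Mᴴ).charpoly = (X - C (s : ℂ)) * (X - C (1 - (s : ℂ))))
    (n : ℕ) (hn : 1 ≤ n)
    (h : ∃ (U V : Matrix (Fin (2 ^ n)) (Fin (2 ^ n)) ℂ)
           (Z : Matrix (Fin (2 ^ (n - 1))) (Fin (2 ^ (n - 1))) ℂ),
        U * Uᴴ = 1 ∧ V * Vᴴ = 1 ∧
        U * (Matrix.reindex finFunctionFinEquiv finFunctionFinEquiv (kronPow M n)) * Vᵀ =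
          Matrix.reindex
            (finProdFinEquiv.trans (finCongr (by rw [← pow_succ', Nat.sub_add_cancel hn])))
            (finProdFinEquiv.trans (finCongr (by rw [← pow_succ', Nat.sub_add_cancel hn])))
            ((((Real.sqrt 2 : ℂ))⁻¹ • (1 : Matrix (Fin 2) (Fin 2) ℂ)) ⊗ₖ Z)) :
    s = 1 / 2 := by
  by_contra hs
  obtain ⟨U, V, Z, hU, hV, hW⟩ := h
  have hG := isHermitian_mul_conjTranspose_self M
  obtain ⟨hpos, hinj⟩ := hG.eigenvalues_pos_injective_of_charpoly_eq hs0 (sub_pos.2 hs1)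
    (fun hs' => hs (by linarith)) (by exact_mod_cast hev)
  have hUu : U ∈ unitaryGroup _ ℂ := mem_unitaryGroup_iff.2 hU
  have hVu : Vᵀ ∈ unitaryGroup _ ℂ := transpose_mem_unitaryGroup_iff.2 (mem_unitaryGroup_iff.2 hV)
  set Y := ((Real.sqrt 2 : ℂ))⁻¹ • Z
  refine hG.charpoly_kronPow_ne_mul_self hpos hinj n (Y * Yᴴ).charpoly ?_
  calc (kronPow (M * Mᴴ) n).charpoly
      = (U * reindex finFunctionFinEquiv finFunctionFinEquiv (kronPow M n) * Vᵀ *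
          (U * reindex finFunctionFinEquiv finFunctionFinEquiv (kronPow M n) * Vᵀ)ᴴ).charpoly := by
        rw [charpoly_unitary_mul_mul_conjTranspose_self hUu hVu,
          charpoly_reindex_mul_conjTranspose_self, kronPow_conjTranspose, kronPow_mul]
    _ = ((1 : Matrix (Fin 2) (Fin 2) ℂ) ⊗ₖ Y * ((1 : Matrix (Fin 2) (Fin 2) ℂ) ⊗ₖ Y)ᴴ).charpoly := by
        rw [hW, charpoly_reindex_mul_conjTranspose_self, smul_kronecker, ← kronecker_smul]
    _ = (Y * Yᴴ).charpoly * (Y * Yᴴ).charpoly := by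
        rw [conjTranspose_kronecker, conjTranspose_one, ← mul_kronecker_mul, Matrix.one_mul,
          charpoly_one_kronecker, Fintype.card_fin, sq]
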